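/- Controlled interpolants: if the derivation of (∅^p, I) by interpolating S-resolution always uses I = true in rule R2', then A ∧ ¬I is unsatisfiable (equivalently Pr(Q : (A ∧ ¬I)) = 0), i.e., ⊨ A ⟹ I; dually, if I = false is always used in R2', then I ∧ B is unsatisfiable, i.e., ⊨ I ⟹ ¬B. -/
import Mathlib


/-- A quantifier in an SSAT prefix: existential or randomized with probability `p`. -/
inductive SQ where
  | ex : SQ
  | rand : ℝ → SQ

/-- Validity of a quantifier: randomized quantifiers carry a probability `0 < p < 1`. -/
def SQ.valid : SQ → Prop
  | SQ.ex => True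
  | SQ.rand p => 0 < p ∧ p < 1

/-- A (non-tautological) clause: each variable occurs at most once, with
`some true` a positive and `some false` a negative literal. -/
abbrev Clause := ℕ → Option Bool

/-- The clause `c` is satisfied by assignment `σ`. -/
def clauseSat (c : Clause) (σ : ℕ → Bool) : Prop :=
  ∃ j : ℕ, ∃ b : Bool, c j = some b ∧ σ j = b

/-- `σ` agrees with the (unique) falsifying assignment of `c` on the variables of `c`. -/
def Falsifies (σ : ℕ → Bool) (c : Clause) : Prop :=
  ∀ j : ℕ, ∀ b : Bool, c j = some b → σ j = !b

/-- Satisfaction of a CNF, given as a list of clauses. -/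
def cnfSat (φ : List Clause) (σ : ℕ → Bool) : Prop :=
  ∀ c ∈ φ, clauseSat c σ

/-- Variable `j` occurs in the CNF `φ`. -/
def varsIn (φ : List Clause) (j : ℕ) : Prop :=
  ∃ c ∈ φ, c j ≠ none

/-- The formula `I` mentions only variables in `W`. -/
def VarsSubsetN (I : (ℕ → Bool) → Prop) (W : Set ℕ) : Prop :=
  ∀ σ τ : ℕ → Bool, (∀ v ∈ W, σ v = τ v) → (I σ ↔ I τ)

/-- Interpolating S-resolution on the SSAT formula `Q : (A ∧ B)`: derivation of pairs
`(c^p, I)` of annotated clauses and intermediate interpolants.  The parameter `Allowed`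
restricts the interpolants that may be chosen in rule R2'. -/
inductive ISRes (Q : List SQ) (A B : List Clause)
    (Allowed : ((ℕ → Bool) → Prop) → Prop) :
    Clause → ℝ → ((ℕ → Bool) → Prop) → Prop
  /-- R1' for a clause of `A`: interpolant `false`. -/
  | origA (c : Clause) (hc : c ∈ A) : ISRes Q A B Allowed c 0 (fun _ => False)
  /-- R1' for a clause of `B`: interpolant `true`. -/
  | origB (c : Clause) (hc : c ∈ B) : ISRes Q A B Allowed c 0 (fun _ => True)
  /-- R2': any (allowed) formula over the common variables may serve as interpolant. -/
  | sat (c : Clause) (I : (ℕ → Bool) → Prop)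
      (hvar : ∀ j : ℕ, ∀ b : Bool, c j = some b → j < Q.length)
      (h : ∀ σ : ℕ → Bool, Falsifies σ c → cnfSat (A ++ B) σ)
      (hIvars : VarsSubsetN I {j | varsIn A j ∧ varsIn B j})
      (hallow : Allowed I) :
      ISRes Q A B Allowed c 1 I
  /-- R3': resolution on the quantifier-maximal variable `x`, combining interpolants
  by `∨`, `∧`, or `(¬x ∨ I₁) ∧ (x ∨ I₂)` according to where `x` occurs. -/
  | res (d₁ d₂ : Clause) (p₁ p₂ : ℝ) (x : ℕ) (q : SQ) (p : ℝ)
      (I₁ I₂ I : (ℕ → Bool) → Prop)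
      (h₁ : ISRes Q A B Allowed d₁ p₁ I₁) (h₂ : ISRes Q A B Allowed d₂ p₂ I₂)
      (hx1 : d₁ x = some false) (hx2 : d₂ x = some true)
      (hq : Q[x]? = some q)
      (hmax : ∀ j : ℕ, j ≠ x → (d₁ j ≠ none ∨ d₂ j ≠ none) → j < x)
      (hcompat : ∀ j : ℕ, j ≠ x → ∀ b : Bool, d₁ j = some b → d₂ j ≠ some (!b))
      (hp : p = match q with
        | SQ.ex => max p₁ p₂
        | SQ.rand px => px * p₁ + (1 - px) * p₂)
      (hI : (varsIn A x ∧ ¬ varsIn B x ∧ I = fun σ => I₁ σ ∨ I₂ σ)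
          ∨ (¬ varsIn A x ∧ varsIn B x ∧ I = fun σ => I₁ σ ∧ I₂ σ)
          ∨ (varsIn A x ∧ varsIn B x ∧
              I = fun σ => (σ x = false ∨ I₁ σ) ∧ (σ x = true ∨ I₂ σ))) :
      ISRes Q A B Allowed (fun j => if j = x then none else (d₁ j <|> d₂ j)) p I

lemma cnfSat_update {φ : List Clause} {σ : ℕ → Bool} {x : ℕ} (b : Bool)
    (hnx : ¬ varsIn φ x) (hs : cnfSat φ σ) : cnfSat φ (Function.update σ x b) := by
  intro e he
  obtain ⟨j, b', hj, hb⟩ := hs e he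
  refine ⟨j, b', hj, ?_⟩
  have hjx : j ≠ x := by rintro rfl; exact hnx ⟨e, he, by simp [hj]⟩
  rw [Function.update_of_ne hjx]; exact hb

lemma isres_inv {Q : List SQ} {A B : List Clause}
    {Allowed : ((ℕ → Bool) → Prop) → Prop} {c : Clause} {p : ℝ}
    {I : (ℕ → Bool) → Prop}
    (h : ISRes Q A B Allowed c p I) :
    VarsSubsetN I {j | varsIn A j ∧ varsIn B j} ∧
    ((∀ J, Allowed J → J = fun _ => True) →
      ∀ σ : ℕ → Bool, Falsifies σ c → cnfSat A σ → I σ) ∧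
    ((∀ J, Allowed J → J = fun _ => False) →
      ∀ σ : ℕ → Bool, Falsifies σ c → cnfSat B σ → ¬ I σ) := by
  induction h with
  | origA c hc =>
    refine ⟨fun σ τ _ => Iff.rfl, ?_, ?_⟩
    · intro _ σ hf hA
      obtain ⟨j, b, hj, hb⟩ := hA c hc
      have := hf j b hj
      simp [this] at hb
    · intro _ σ _ _ h; exact h
  | origB c hc =>
    refine ⟨fun σ τ _ => Iff.rfl, ?_, ?_⟩
    · intro _ σ _ _; trivial
    · intro _ σ hf hB _
      obtain ⟨j, b, hj, hb⟩ := hB c hc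
      have := hf j b hj
      simp [this] at hb
  | sat c I hvar hs hIvars hallow =>
    refine ⟨hIvars, ?_, ?_⟩
    · intro hall σ _ _; rw [hall I hallow]; trivial
    · intro hall σ _ _ hIσ; rw [hall I hallow] at hIσ; exact hIσ
  | res d₁ d₂ p₁ p₂ x q p I₁ I₂ I h₁ h₂ hx1 hx2 hq hmax hcompat hp hI ih₁ ih₂ =>
    -- falsifying the resolvent gives (updated) falsifiers of the premises
    have hf1 : ∀ σ : ℕ → Bool,
        Falsifies σ (fun j => if j = x then none else (d₁ j <|> d₂ j)) →
        Falsifies (Function.update σ x true) d₁ := by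
      intro σ hf j b hj
      rcases eq_or_ne j x with rfl | hjx
      · rw [hx1] at hj; injection hj with hb; subst hb; simp
      · rw [Function.update_of_ne hjx]
        apply hf j b
        simp only [if_neg hjx]
        rw [hj]; rfl
    have hf2 : ∀ σ : ℕ → Bool,
        Falsifies σ (fun j => if j = x then none else (d₁ j <|> d₂ j)) →
        Falsifies (Function.update σ x false) d₂ := by
      intro σ hf j b hj
      rcases eq_or_ne j x with rfl | hjx
      · rw [hx2] at hj; injection hj with hb; subst hb; simp
      · rw [Function.update_of_ne hjx]
        apply hf j b
        simp only [if_neg hjx]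
        rcases h1 : d₁ j with _ | b'
        · rw [hj]; rfl
        · have hne := hcompat j hjx b' h1
          rw [hj] at hne
          have hb : b = b' := by cases b <;> cases b' <;> simp_all
          subst hb; rfl
    have hfd1 : ∀ σ : ℕ → Bool, σ x = true →
        Falsifies σ (fun j => if j = x then none else (d₁ j <|> d₂ j)) →
        Falsifies σ d₁ := by
      intro σ hσx hf
      have he : Function.update σ x true = σ := by
        rw [← hσx, Function.update_eq_self]
      exact he ▸ hf1 σ hf
    have hfd2 : ∀ σ : ℕ → Bool, σ x = false →
        Falsifies σ (fun j => if j = x then none else (d₁ j <|> d₂ j)) →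
        Falsifies σ d₂ := by
      intro σ hσx hf
      have he : Function.update σ x false = σ := by
        rw [← hσx, Function.update_eq_self]
      exact he ▸ hf2 σ hf
    -- interpolants over common variables are insensitive to a non-common variable
    have hind : ∀ J : (ℕ → Bool) → Prop,
        VarsSubsetN J {j | varsIn A j ∧ varsIn B j} →
        ¬ (varsIn A x ∧ varsIn B x) →
        ∀ (σ : ℕ → Bool) (b : Bool), J (Function.update σ x b) ↔ J σ := by
      intro J hJ hx σ b
      apply hJ
      intro v hv
      have hvx : v ≠ x := by rintro rfl; exact hx hv
      rw [Function.update_of_ne hvx]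
    refine ⟨?_, ?_, ?_⟩
    · -- variable condition
      rcases hI with ⟨hxA, hxB, rfl⟩ | ⟨hxA, hxB, rfl⟩ | ⟨hxA, hxB, rfl⟩
      · intro σ τ hagree
        exact or_congr (ih₁.1 σ τ hagree) (ih₂.1 σ τ hagree)
      · intro σ τ hagree
        exact and_congr (ih₁.1 σ τ hagree) (ih₂.1 σ τ hagree)
      · intro σ τ hagree
        have hxe : σ x = τ x := hagree x ⟨hxA, hxB⟩
        exact and_congr (or_congr (by rw [hxe]) (ih₁.1 σ τ hagree))
          (or_congr (by rw [hxe]) (ih₂.1 σ τ hagree))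
    · -- A ⟹ I part
      intro hall σ hf hAsat
      have hI1 := ih₁.2.1 hall
      have hI2 := ih₂.2.1 hall
      rcases hI with ⟨hxA, hxB, rfl⟩ | ⟨hxA, hxB, rfl⟩ | ⟨hxA, hxB, rfl⟩
      · rcases hσx : σ x with _ | _
        · exact Or.inr (hI2 σ (hfd2 σ hσx hf) hAsat)
        · exact Or.inl (hI1 σ (hfd1 σ hσx hf) hAsat)
      · rcases hσx : σ x with _ | _
        · refine ⟨?_, hI2 σ (hfd2 σ hσx hf) hAsat⟩
          have h1 := hI1 _ (hf1 σ hf) (cnfSat_update true hxA hAsat)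
          exact (hind I₁ ih₁.1 (fun h => hxA h.1) σ true).mp h1
        · refine ⟨hI1 σ (hfd1 σ hσx hf) hAsat, ?_⟩
          have h2 := hI2 _ (hf2 σ hf) (cnfSat_update false hxA hAsat)
          exact (hind I₂ ih₂.1 (fun h => hxA h.1) σ false).mp h2
      · rcases hσx : σ x with _ | _
        · exact ⟨Or.inl hσx, Or.inr (hI2 σ (hfd2 σ hσx hf) hAsat)⟩
        · exact ⟨Or.inr (hI1 σ (hfd1 σ hσx hf) hAsat), Or.inl hσx⟩
    · -- I ⟹ ¬B part
      intro hall σ hf hBsat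
      have hI1 := ih₁.2.2 hall
      have hI2 := ih₂.2.2 hall
      rcases hI with ⟨hxA, hxB, rfl⟩ | ⟨hxA, hxB, rfl⟩ | ⟨hxA, hxB, rfl⟩
      · rintro (hIσ | hIσ)
        · rcases hσx : σ x with _ | _
          · have h1 := hI1 _ (hf1 σ hf) (cnfSat_update true hxB hBsat)
            exact h1 ((hind I₁ ih₁.1 (fun h => hxB h.2) σ true).mpr hIσ)
          · exact hI1 σ (hfd1 σ hσx hf) hBsat hIσ
        · rcases hσx : σ x with _ | _
          · exact hI2 σ (hfd2 σ hσx hf) hBsat hIσ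
          · have h2 := hI2 _ (hf2 σ hf) (cnfSat_update false hxB hBsat)
            exact h2 ((hind I₂ ih₂.1 (fun h => hxB h.2) σ false).mpr hIσ)
      · rintro ⟨hIσ1, hIσ2⟩
        rcases hσx : σ x with _ | _
        · exact hI2 σ (hfd2 σ hσx hf) hBsat hIσ2
        · exact hI1 σ (hfd1 σ hσx hf) hBsat hIσ1
      · rintro ⟨ha, hb⟩
        rcases hσx : σ x with _ | _
        · rcases hb with hb | hb
          · rw [hσx] at hb; exact Bool.false_ne_true hb
          · exact hI2 σ (hfd2 σ hσx hf) hBsat hb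
        · rcases ha with ha | ha
          · rw [hσx] at ha; exact Bool.true_eq_false_eq_False ha
          · exact hI1 σ (hfd1 σ hσx hf) hBsat ha

theorem isres_controlled_interpolants (Q : List SQ) (A B : List Clause) (p : ℝ)
    (hQ : ∀ q ∈ Q, q.valid)
    (hvars : ∀ c ∈ A ++ B, ∀ j : ℕ, ∀ b : Bool, c j = some b → j < Q.length) :
    (∀ I : (ℕ → Bool) → Prop,
      ISRes Q A B (fun I' => I' = fun _ => True) (fun _ => none) p I →
        ¬ ∃ σ : ℕ → Bool, cnfSat A σ ∧ ¬ I σ) ∧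
    (∀ I : (ℕ → Bool) → Prop,
      ISRes Q A B (fun I' => I' = fun _ => False) (fun _ => none) p I →
        ¬ ∃ σ : ℕ → Bool, I σ ∧ cnfSat B σ) := by
  have hfals : ∀ σ : ℕ → Bool, Falsifies σ (fun _ => none) :=
    fun σ j b hj => by cases hj
  constructor
  · rintro I h ⟨σ, h1, h2⟩
    exact h2 ((isres_inv h).2.1 (fun J hJ => hJ) σ (hfals σ) h1)
  · rintro I h ⟨σ, h1, h2⟩
    exact (isres_inv h).2.2 (fun J hJ => hJ) σ (hfals σ) h2 h1
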